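/- arXiv:2109.10846 — 2 statements merged into one kernel-verified Lean document; each statement's English description precedes it below -/
import Mathlib

section
/- Let T have the wandering subspace property. For every bounded point evaluation w, the operator E_w E_w* is invertible on ker T*. Moreover E_0 E_0* is the identity on ker T*. -/
/-! `E_w` is a projection (not necessarily orthogonal) onto `K = ker T*`: it maps into `K` and
fixes `K`. Hence for `x ∈ K`, `‖x‖² = re ⟪E_w* x, x⟫ ≤ ‖E_w* x‖ ‖x‖`, so `S = E_w*|_K` is bounded
below and `S* S = P_K E_w E_w*|_K = E_w E_w*|_K` is coercive, hence invertible.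
For `w = 0`, `E_0` kills `Tⁿ(K)` for `n ≥ 1`, which is orthogonal to `K` because `T* K = 0`; so
`⟪x, E_0 y⟫ = ⟪x, y⟫` for `x ∈ K` and `y` in a dense subspace, i.e. `E_0* x = x`. -/

open ContinuousLinearMap Submodule Filter

noncomputable section

variable {H : Type*} [NormedAddCommGroup H] [InnerProductSpace ℂ H] [CompleteSpace H]

/-- The wandering subspace `ker T*`. -/
def kerAdj (T : H →L[ℂ] H) : Submodule ℂ H := LinearMap.ker (ContinuousLinearMap.adjoint T : H →ₗ[ℂ] H)

/-- `T` has the wandering subspace property: the closed linear span of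
`⋃ₙ Tⁿ(ker T*)` is all of `H`. -/
def WSP (T : H →L[ℂ] H) : Prop :=
  (⨆ n : ℕ, (kerAdj T).map ((T ^ n : H →L[ℂ] H) : H →ₗ[ℂ] H)).topologicalClosure = ⊤

/-- `w` is a bounded point evaluation for `T`: `‖p(w)‖ ≤ c ‖p(T)‖` for all
`ker T*`-valued polynomials `p`, where `p(T) = Σ Tⁿ xₙ` for `p(z) = Σ xₙ zⁿ`. -/
def IsBPE (T : H →L[ℂ] H) (w : ℂ) : Prop :=
  ∃ c > (0 : ℝ), ∀ (k : ℕ) (x : ℕ → H), (∀ n, x n ∈ kerAdj T) →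
    ‖∑ n ∈ Finset.range (k + 1), w ^ n • x n‖ ≤
      c * ‖∑ n ∈ Finset.range (k + 1), (T ^ n) (x n)‖

/-- `E` is the (continuous extension of the) evaluation operator at `w`:
it takes values in `ker T*` and sends `p(T)` to `p(w)`. -/
def IsEval (T : H →L[ℂ] H) (w : ℂ) (E : H →L[ℂ] H) : Prop :=
  (∀ y, E y ∈ kerAdj T) ∧
    ∀ (k : ℕ) (x : ℕ → H), (∀ n, x n ∈ kerAdj T) →
      E (∑ n ∈ Finset.range (k + 1), (T ^ n) (x n)) =
        ∑ n ∈ Finset.range (k + 1), w ^ n • x n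

namespace ContinuousLinearMap

variable {𝕜 V : Type*} [RCLike 𝕜] [NormedAddCommGroup V] [InnerProductSpace 𝕜 V]
  [CompleteSpace V]

lemma norm_le_norm_adjoint_apply_of_apply_eq_self {E : V →L[𝕜] V} {x : V}
    (hx : E x = x) : ‖x‖ ≤ ‖adjoint E x‖ := by
  have : ‖x‖ ^ 2 ≤ ‖adjoint E x‖ * ‖x‖ :=
    calc ‖x‖ ^ 2 = RCLike.re (inner 𝕜 (adjoint E x) x) := by
          rw [adjoint_inner_left, hx, inner_self_eq_norm_sq]
      _ ≤ ‖adjoint E x‖ * ‖x‖ := re_inner_le_norm _ _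
  nlinarith [norm_nonneg x, norm_nonneg (adjoint E x)]

lemma norm_le_norm_apply_adjoint_apply_of_apply_eq_self {E : V →L[𝕜] V} {x : V}
    (hx : E x = x) : ‖x‖ ≤ ‖E (adjoint E x)‖ := by
  have hadj := norm_le_norm_adjoint_apply_of_apply_eq_self hx
  have : ‖adjoint E x‖ ^ 2 ≤ ‖x‖ * ‖E (adjoint E x)‖ :=
    calc ‖adjoint E x‖ ^ 2 = RCLike.re (inner 𝕜 x (E (adjoint E x))) := by
          rw [← adjoint_inner_left, inner_self_eq_norm_sq]
      _ ≤ ‖x‖ * ‖E (adjoint E x)‖ := re_inner_le_norm _ _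
  nlinarith [norm_nonneg x, norm_nonneg (E (adjoint E x))]

variable {W : Type*} [NormedAddCommGroup W] [InnerProductSpace 𝕜 W] [CompleteSpace W]

lemma isUnit_adjoint_comp_self_of_norm_le {S : V →L[𝕜] W} (hS : ∀ x, ‖x‖ ≤ ‖S x‖) :
    IsUnit (adjoint S ∘L S) := by
  refine isUnit_of_forall_le_norm_inner_map _ one_pos fun x => ?_
  rw [comp_apply, adjoint_inner_left, inner_self_eq_norm_sq_to_K, norm_pow, RCLike.norm_ofReal,
    abs_norm, NNReal.coe_one, mul_one]
  exact pow_le_pow_left₀ (norm_nonneg x) (hS x) 2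

lemma surjOn_apply_adjoint_apply_of_isProj {K : Submodule 𝕜 V} [CompleteSpace K]
    {E : V →L[𝕜] V} (hE : LinearMap.IsProj K E) :
    Set.SurjOn (fun x => E (adjoint E x)) (K : Set V) (K : Set V) := by
  intro y hy
  set S : K →L[𝕜] V := adjoint E ∘L K.subtypeL
  have hS : ∀ x : K, ‖x‖ ≤ ‖S x‖ := fun x => by
    simpa only [S, comp_apply, coe_subtypeL, Submodule.coe_norm, Submodule.coe_subtype] using
      norm_le_norm_adjoint_apply_of_apply_eq_self (hE.map_id x x.2)
  obtain ⟨x, hx⟩ :=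
    (isUnit_iff_bijective.mp (isUnit_adjoint_comp_self_of_norm_le hS)).2 ⟨y, hy⟩
  have hSS : (adjoint S (S x) : V) = E (adjoint E x) := by
    simp only [S, adjoint_comp, adjoint_adjoint, K.adjoint_subtypeL, comp_apply, coe_subtypeL]
    exact K.starProjection_eq_self_iff.mpr (hE.map_mem _)
  exact ⟨x, x.2, hSS.symm.trans (congrArg Subtype.val hx)⟩

end ContinuousLinearMap

lemma WSP.ext {F : Type*} [NormedAddCommGroup F] [NormedSpace ℂ F] {T : H →L[ℂ] H} (hT : WSP T)
    {f g : H →L[ℂ] F} (h : ∀ n, ∀ v ∈ kerAdj T, f ((T ^ n) v) = g ((T ^ n) v)) : f = g := by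
  refine ext_on (s := ⋃ n : ℕ, ⇑(T ^ n) '' (kerAdj T : Set H)) ?_ ?_
  · have hspan : ∀ n : ℕ, span ℂ (⇑(T ^ n) '' (kerAdj T : Set H)) =
        (kerAdj T).map ((T ^ n : H →L[ℂ] H) : H →ₗ[ℂ] H) := fun n => by
      rw [← coe_coe, span_image, span_eq]
    rw [span_iUnion, dense_iff_topologicalClosure_eq_top]
    simp only [hspan]
    exact hT
  · simp only [Set.EqOn, Set.mem_iUnion, Set.mem_image]
    rintro _ ⟨n, v, hv, rfl⟩
    exact h n v hv

namespace IsEval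

variable {T E : H →L[ℂ] H} {w : ℂ}

lemma apply_pow_apply (hE : IsEval T w E) {v : H} (hv : v ∈ kerAdj T) (n : ℕ) :
    E ((T ^ n) v) = w ^ n • v := by
  have h := hE.2 n (Pi.single n v) (fun m => by
    rcases eq_or_ne m n with rfl | hm <;> simp [*])
  rwa [map_sum, Finset.sum_eq_single_of_mem n (by simp) (fun m _ hm => by simp [hm]),
    Finset.sum_eq_single_of_mem n (by simp) (fun m _ hm => by simp [hm]),
    Pi.single_eq_same] at h

lemma isProj (hE : IsEval T w E) : LinearMap.IsProj (kerAdj T) E :=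
  ⟨hE.1, fun v hv => by simpa using hE.apply_pow_apply hv 0⟩

lemma adjoint_apply_eq_self (hT : WSP T) (hE : IsEval T 0 E) {x : H} (hx : x ∈ kerAdj T) :
    adjoint E x = x := by
  have hinner : innerSL ℂ x ∘L E = innerSL ℂ x := hT.ext fun n v hv => by
    rcases n with _ | n
    · simpa using congrArg (inner ℂ x) (hE.apply_pow_apply hv 0)
    · have hTx : adjoint T x = 0 := hx
      rw [comp_apply, hE.apply_pow_apply hv, zero_pow n.succ_ne_zero, zero_smul, map_zero,
        innerSL_apply_apply, pow_succ', mul_apply_eq_comp, ← adjoint_inner_left, hTx,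
        inner_zero_left]
  refine ext_inner_right ℂ fun v => ?_
  rw [adjoint_inner_left]
  exact DFunLike.congr_fun hinner v

end IsEval

theorem stmt_5_general (T : H →L[ℂ] H) (hT : WSP T) :
    (∀ (w : ℂ), IsBPE T w → ∀ (E : H →L[ℂ] H), IsEval T w E →
      ((∀ y ∈ kerAdj T, ∃ x ∈ kerAdj T, E (ContinuousLinearMap.adjoint E x) = y) ∧
        ∃ c > (0 : ℝ), ∀ x ∈ kerAdj T, ‖x‖ ≤ c * ‖E (ContinuousLinearMap.adjoint E x)‖)) ∧
    (∀ (E : H →L[ℂ] H), IsEval T 0 E →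
      ∀ x ∈ kerAdj T, E (ContinuousLinearMap.adjoint E x) = x) := by
  refine ⟨fun w _ E hE => ⟨?_, 1, one_pos, fun x hx => ?_⟩, fun E hE x hx => ?_⟩
  · have : CompleteSpace (kerAdj T) := (isClosed_ker _).completeSpace_coe
    exact surjOn_apply_adjoint_apply_of_isProj hE.isProj
  · rw [one_mul]
    exact norm_le_norm_apply_adjoint_apply_of_apply_eq_self (hE.isProj.map_id x hx)
  · rw [hE.adjoint_apply_eq_self hT hx, hE.isProj.map_id x hx]

/-- `E_w E_w*` is invertible on `ker T*` for every bounded point evaluation `w`;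
moreover `E_0 E_0*` is the identity on `ker T*`. -/
theorem stmt_5 [TopologicalSpace.SeparableSpace H] (T : H →L[ℂ] H) (hT : WSP T) :
    (∀ (w : ℂ), IsBPE T w → ∀ (E : H →L[ℂ] H), IsEval T w E →
      ((∀ y ∈ kerAdj T, ∃ x ∈ kerAdj T, E (ContinuousLinearMap.adjoint E x) = y) ∧
        ∃ c > (0 : ℝ), ∀ x ∈ kerAdj T, ‖x‖ ≤ c * ‖E (ContinuousLinearMap.adjoint E x)‖)) ∧
    (∀ (E : H →L[ℂ] H), IsEval T 0 E →
      ∀ x ∈ kerAdj T, E (ContinuousLinearMap.adjoint E x) = x) :=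
  stmt_5_general T hT
end
end

section
/- Let T be left-invertible with the wandering subspace property and w a bounded point evaluation with |w| < r := inf_{x ∈ ker T*, x ≠ 0} 1/r_{T'}(x). Then the adjoint evaluation operator satisfies E_w* x = Σ_{n∈ℕ} w̄^n T'^n x for all x ∈ ker T*, the series converging in H. -/
open ContinuousLinearMap Submodule Filter

noncomputable section

variable {H : Type*} [NormedAddCommGroup H] [InnerProductSpace ℂ H] [CompleteSpace H]

/-!
Since `T* T' = 1` and `T'` maps into the range of `T`, the families `Tᵏ(ker T*)` and
`T'ⁿ(ker T*)` are biorthogonal: `⟪Tᵏ u, T'ⁿ x⟫ = δₖₙ ⟪u, x⟫`. For `x ∈ ker T*` the bound on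
`|w|` and the root test make `Σ w̄ⁿ T'ⁿ x` converge, and pairing its sum with `Tᵏ u` gives
`w̄ᵏ ⟪u, x⟫ = ⟪E_w Tᵏ u, x⟫ = ⟪Tᵏ u, E_w* x⟫`. The vectors `Tᵏ u` span a dense subspace by
the wandering subspace property, so the sum is `E_w* x`.
-/
open scoped InnerProductSpace

lemma pow_mul_pow_of_mul_eq_one_of_le {M : Type*} [Monoid M] {b s : M} (h : b * s = 1)
    {k n : ℕ} (hkn : k ≤ n) : b ^ k * s ^ n = s ^ (n - k) := by
  obtain ⟨m, rfl⟩ := Nat.exists_eq_add_of_le hkn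
  rw [pow_add, ← mul_assoc, pow_mul_pow_eq_one k h, one_mul, Nat.add_sub_cancel_left]

lemma pow_mul_pow_of_mul_eq_one_of_ge {M : Type*} [Monoid M] {b s : M} (h : b * s = 1)
    {k n : ℕ} (hnk : n ≤ k) : b ^ k * s ^ n = b ^ (k - n) := by
  obtain ⟨m, rfl⟩ := Nat.exists_eq_add_of_le hnk
  rw [add_comm n m, pow_add, mul_assoc, pow_mul_pow_eq_one n h, mul_one, Nat.add_sub_cancel]

-- An unbounded real `limsup` has the junk value `sInf ∅ = 0`.
lemma Real.isBoundedUnder_le_of_limsup_pos {α : Type*} {f : Filter α} {u : α → ℝ}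
    (h : 0 < limsup u f) : f.IsBoundedUnder (· ≤ ·) u := by
  by_contra hu
  have hempty : {a | ∀ᶠ n in f, u n ≤ a} = ∅ :=
    Set.eq_empty_iff_forall_notMem.mpr fun a ha => hu ⟨a, ha⟩
  rw [limsup_eq, hempty, Real.sInf_empty] at h
  exact h.false

lemma summable_pow_smul_of_norm_mul_limsup_lt {𝕜 E : Type*} [NormedField 𝕜]
    [NormedAddCommGroup E] [NormedSpace 𝕜 E] [CompleteSpace E] (c : 𝕜) (v : ℕ → E)
    (hbdd : atTop.IsBoundedUnder (· ≤ ·) fun n => ‖v n‖ ^ (1 / (n : ℝ)))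
    (h : ‖c‖ * limsup (fun n => ‖v n‖ ^ (1 / (n : ℝ))) atTop < 1) :
    Summable fun n => c ^ n • v n := by
  set f : ℕ → ℝ := fun n => ‖v n‖ ^ (1 / (n : ℝ))
  have hc : ∀ᶠ ρ in nhdsWithin (limsup f atTop) (Set.Ioi (limsup f atTop)), ‖c‖ * ρ < 1 :=
    nhdsWithin_le_nhds <|
      (isOpen_lt (continuous_const.mul continuous_id) continuous_const).mem_nhds h
  obtain ⟨ρ, hcρ, hρ⟩ := (hc.and self_mem_nhdsWithin).exists
  have hev : ∀ᶠ n in atTop, f n < ρ := eventually_lt_of_limsup_lt hρ hbdd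
  have hρ0 : 0 ≤ ρ := by
    obtain ⟨n, hn⟩ := hev.exists
    exact (Real.rpow_nonneg (norm_nonneg _) _).trans hn.le
  refine .of_norm_bounded_eventually (g := fun n => (‖c‖ * ρ) ^ n)
    (summable_geometric_of_lt_one (by positivity) hcρ) ?_
  rw [Nat.cofinite_eq_atTop]
  filter_upwards [hev, eventually_ne_atTop 0] with n hn hn0
  have hvn : ‖v n‖ ≤ ρ ^ n := calc
    ‖v n‖ = f n ^ n := by simp only [f, one_div, Real.rpow_inv_natCast_pow (norm_nonneg _) hn0]
    _ ≤ ρ ^ n := pow_le_pow_left₀ (Real.rpow_nonneg (norm_nonneg _) _) hn.le n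
  calc ‖c ^ n • v n‖ = ‖c‖ ^ n * ‖v n‖ := by rw [norm_smul, norm_pow]
    _ ≤ ‖c‖ ^ n * ρ ^ n := by gcongr
    _ = (‖c‖ * ρ) ^ n := (mul_pow _ _ _).symm

section Wandering

variable {T : H →L[ℂ] H}

lemma mem_kerAdj {x : H} : x ∈ kerAdj T ↔ adjoint T x = 0 := Iff.rfl

lemma inner_apply_eq_zero_of_mem_kerAdj {u : H} (hu : u ∈ kerAdj T) (y : H) :
    ⟪u, T y⟫_ℂ = 0 := by
  rw [← adjoint_inner_left, mem_kerAdj.mp hu, inner_zero_left]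

lemma adjoint_pow_apply_eq_zero_of_mem_kerAdj {x : H} (hx : x ∈ kerAdj T) {m : ℕ}
    (hm : m ≠ 0) :
    (adjoint T ^ m) x = 0 := by
  obtain ⟨m, rfl⟩ := Nat.exists_eq_succ_of_ne_zero hm
  rw [pow_succ, mul_apply_eq_comp, mem_kerAdj.mp hx, map_zero]

lemma ContinuousLinearMap.adjoint_pow (T : H →L[ℂ] H) (k : ℕ) :
    adjoint (T ^ k) = adjoint T ^ k := by
  simp only [← star_eq_adjoint, star_pow]

lemma inner_pow_apply_pow_apply {S A : H →L[ℂ] H} (hTS : adjoint T * S = 1) (hS : S = T * A)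
    {u x : H} (hu : u ∈ kerAdj T) (hx : x ∈ kerAdj T) (k n : ℕ) :
    ⟪(T ^ k) u, (S ^ n) x⟫_ℂ = if n = k then ⟪u, x⟫_ℂ else 0 := by
  rw [← adjoint_inner_right, adjoint_pow, ← mul_apply_eq_comp]
  rcases lt_trichotomy k n with hkn | rfl | hnk
  · obtain ⟨m, hm⟩ := Nat.exists_eq_add_of_lt hkn
    rw [pow_mul_pow_of_mul_eq_one_of_le hTS hkn.le, if_neg hkn.ne', hm,
      show k + m + 1 - k = m + 1 by omega, pow_succ', hS, mul_apply_eq_comp, mul_apply_eq_comp,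
      inner_apply_eq_zero_of_mem_kerAdj hu]
  · rw [pow_mul_pow_eq_one k hTS, one_apply_eq_self, if_pos rfl]
  · rw [pow_mul_pow_of_mul_eq_one_of_ge hTS hnk.le, if_neg hnk.ne,
      adjoint_pow_apply_eq_zero_of_mem_kerAdj hx (by omega), inner_zero_right]

lemma inner_pow_apply_tsum_pow_smul {S A : H →L[ℂ] H} (hTS : adjoint T * S = 1)
    (hS : S = T * A)
    {u x : H} (hu : u ∈ kerAdj T) (hx : x ∈ kerAdj T) (k : ℕ) {c : ℂ}
    (hsum : Summable fun n => c ^ n • (S ^ n) x) :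
    ⟪(T ^ k) u, ∑' n, c ^ n • (S ^ n) x⟫_ℂ = c ^ k * ⟪u, x⟫_ℂ := by
  have hterm : (fun n => ⟪(T ^ k) u, c ^ n • (S ^ n) x⟫_ℂ) =
      fun n => if n = k then c ^ k * ⟪u, x⟫_ℂ else 0 := by
    funext n
    rw [inner_smul_right, inner_pow_apply_pow_apply hTS hS hu hx]
    split_ifs with h <;> simp [h]
  exact ((innerSL ℂ ((T ^ k) u)).hasSum hsum.hasSum).unique (hterm ▸ hasSum_ite_eq k _)

lemma IsEval.apply_pow_apply_s13 {w : ℂ} {E : H →L[ℂ] H} (hE : IsEval T w E) {u : H}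
    (hu : u ∈ kerAdj T) (k : ℕ) : E ((T ^ k) u) = w ^ k • u := by
  have hk : k ∈ Finset.range (k + 1) := Finset.self_mem_range_succ k
  have h := hE.2 k (fun n => if n = k then u else 0) fun n => by split_ifs <;> simp [hu]
  rwa [Finset.sum_eq_single_of_mem k hk fun n _ hn => by simp [hn],
    Finset.sum_eq_single_of_mem k hk fun n _ hn => by simp [hn], if_pos rfl] at h

lemma IsEval.inner_pow_apply_adjoint {w : ℂ} {E : H →L[ℂ] H} (hE : IsEval T w E) {u : H}
    (hu : u ∈ kerAdj T) (k : ℕ) (x : H) :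
    ⟪(T ^ k) u, adjoint E x⟫_ℂ = starRingEnd ℂ w ^ k * ⟪u, x⟫_ℂ := by
  rw [adjoint_inner_right, hE.apply_pow_apply_s13 hu, inner_smul_left, map_pow]

lemma WSP.ext_inner (hT : WSP T) {y z : H}
    (h : ∀ k, ∀ u ∈ kerAdj T, ⟪(T ^ k) u, y⟫_ℂ = ⟪(T ^ k) u, z⟫_ℂ) : y = z := by
  rw [← sub_eq_zero, ← Submodule.mem_bot ℂ, ← Submodule.topologicalClosure_eq_top_iff.mp hT,
    Submodule.mem_orthogonal]
  intro v hv
  refine Submodule.iSup_induction _ (motive := fun v => ⟪v, y - z⟫_ℂ = 0) hv ?_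
    (inner_zero_left _) fun v₁ v₂ h₁ h₂ => by rw [inner_add_left, h₁, h₂, add_zero]
  rintro k _ ⟨u, hu, rfl⟩
  rw [inner_sub_right, coe_coe, h k u hu, sub_self]

end Wandering

theorem stmt_13_general (T T' A : H →L[ℂ] H) (hT : WSP T)
    (hA2 : (ContinuousLinearMap.adjoint T ∘L T) ∘L A = 1)
    (hT' : T' = T ∘L A) (w : ℂ)
    (hwr : ‖w‖ < sInf {s : ℝ | ∃ x ∈ kerAdj T, x ≠ 0 ∧
      s = (Filter.atTop.limsup fun n : ℕ => ‖(T' ^ n) x‖ ^ (1 / (n : ℝ)))⁻¹})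
    (E : H →L[ℂ] H) (hE : IsEval T w E) :
    ∀ x ∈ kerAdj T,
      HasSum (fun n : ℕ => (starRingEnd ℂ w) ^ n • (T' ^ n) x)
        (ContinuousLinearMap.adjoint E x) := by
  intro x hx
  obtain rfl | hx0 := eq_or_ne x 0
  · simp [hasSum_zero]
  set t := atTop.limsup fun n : ℕ => ‖(T' ^ n) x‖ ^ (1 / (n : ℝ))
  have hwt : ‖w‖ < t⁻¹ := by
    refine hwr.trans_le (csInf_le ?_ ⟨x, hx, hx0, rfl⟩)
    by_contra hbdd
    rw [Real.sInf_of_not_bddBelow hbdd] at hwr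
    exact (norm_nonneg w).not_gt hwr
  have ht : 0 < t := inv_pos.mp ((norm_nonneg w).trans_lt hwt)
  have hsum : Summable fun n : ℕ => (starRingEnd ℂ w) ^ n • (T' ^ n) x := by
    refine summable_pow_smul_of_norm_mul_limsup_lt _ _
      (Real.isBoundedUnder_le_of_limsup_pos ht) ?_
    rw [RCLike.norm_conj]
    exact (mul_lt_mul_of_pos_right hwt ht).trans_eq (inv_mul_cancel₀ ht.ne')
  have hTT' : adjoint T * T' = 1 := by rw [hT', ← hA2]; rfl
  convert hsum.hasSum using 1
  refine hT.ext_inner fun k u hu => ?_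
  rw [hE.inner_pow_apply_adjoint hu, inner_pow_apply_tsum_pow_smul hTT' hT' hu hx k hsum]

/-- for `|w| < r = inf_{0 ≠ x ∈ ker T*} 1 / r_{T'}(x)` one has
`E_w* x = Σₙ w̄ⁿ T'ⁿ x` for all `x ∈ ker T*`. -/
theorem stmt_13 [TopologicalSpace.SeparableSpace H] (T T' A : H →L[ℂ] H) (hT : WSP T)
    (hA1 : A ∘L (ContinuousLinearMap.adjoint T ∘L T) = 1)
    (hA2 : (ContinuousLinearMap.adjoint T ∘L T) ∘L A = 1)
    (hT' : T' = T ∘L A) (w : ℂ) (hw : IsBPE T w)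
    (hwr : ‖w‖ < sInf {s : ℝ | ∃ x ∈ kerAdj T, x ≠ 0 ∧
      s = (Filter.atTop.limsup fun n : ℕ => ‖(T' ^ n) x‖ ^ (1 / (n : ℝ)))⁻¹})
    (E : H →L[ℂ] H) (hE : IsEval T w E) :
    ∀ x ∈ kerAdj T,
      HasSum (fun n : ℕ => (starRingEnd ℂ w) ^ n • (T' ^ n) x)
        (ContinuousLinearMap.adjoint E x) :=
  stmt_13_general T T' A hT hA2 hT' w hwr E hE
end
end
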